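/- Covariant Stinespring theorem (uniqueness): Under the hypotheses of the covariant Stinespring theorem, if (π_X, v, w, H', K') is a covariant representation of (G,η,X), V' ∈ L(H,H'), W' : K → K' a coisometry, satisfying Φ(x) = W'* π_X(x) V', v_t V' = V' u_t, w_t W' = W' u'_t, [π_X(X)V'H] = K', and [π_X(X)*W'K] = H', then there exist unitaries U₁ ∈ L(H_Φ, H') and U₂ ∈ L(K_Φ, K') such that U₂ π_Φ(x) = π_X(x) U₁ for all x ∈ X, v_t U₁ = U₁ v^Φ_t and w_t U₂ = U₂ w^Φ_t for all t ∈ G, V' = U₁ V_Φ and W' = U₂ W_Φ. -/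

import Mathlib

/-!
Both dilations realise the same Gram data: `⟪π x (V g), π y (V h)⟫ = ⟪Φ x g, Φ y h⟫`, since `W*` is
isometric. Matching the total families `π x (V h)` therefore gives the unitary `U₂` on the `K`-side.
The compressions `V* ρ(a) V` agree on the elements `⟨x, y⟩ = E x y`, hence on all of `A` by
continuity of `*`-homomorphisms of C*-algebras; this makes `U₂` intertwine the operators
`π x π(y)*`, so that the families `π(y)* (W k)` also have equal Gram matrices and give `U₁`.
Every remaining identity is checked on these total families.
-/

noncomputable section

open ContinuousLinearMap

/-- An element of the form `star c * c` (positivity in a star ring). -/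
def StarPos {B : Type*} [Mul B] [Star B] (b : B) : Prop := ∃ c : B, b = star c * c

/-- Complete positivity of a `ℂ`-linear map between star rings. -/
def IsCPMap {A B : Type*} [NonUnitalRing A] [StarRing A] [Module ℂ A]
    [NonUnitalRing B] [StarRing B] [Module ℂ B] (φ : A →ₗ[ℂ] B) : Prop :=
  ∀ (n : ℕ) (M : Matrix (Fin n) (Fin n) A), StarPos M → StarPos (M.map ⇑φ)

/-- A unitary representation of a group `G` on a Hilbert space. -/
def IsUnitaryRep {G H' : Type*} [Group G] [NormedAddCommGroup H']
    [InnerProductSpace ℂ H'] [CompleteSpace H'] (v : G → H' →L[ℂ] H') : Prop :=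
  v 1 = 1 ∧ (∀ s t, v (s * t) = v s ∘L v t) ∧
    ∀ t, adjoint (v t) ∘L v t = 1 ∧ v t ∘L adjoint (v t) = 1

open Set
open scoped InnerProductSpace CStarAlgebra

section TopologicalModule

variable {R ι M N : Type*} [Semiring R]
  [AddCommMonoid M] [Module R M] [TopologicalSpace M] [ContinuousAdd M] [ContinuousConstSMul R M]
  {f : ι → M} (hf : (Submodule.span R (range f)).topologicalClosure = ⊤)
include hf

theorem Finsupp.denseRange_linearCombination : DenseRange (Finsupp.linearCombination R f) := by
  rw [DenseRange, ← LinearMap.coe_range, Finsupp.range_linearCombination]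
  exact Submodule.dense_iff_topologicalClosure_eq_top.mpr hf

variable [AddCommMonoid N] [Module R N] [TopologicalSpace N] [T2Space N]

theorem ContinuousLinearMap.ext_on_range_of_topologicalClosure {S T : M →L[R] N}
    (h : ∀ i, S (f i) = T (f i)) : S = T :=
  ext_on (Submodule.dense_iff_topologicalClosure_eq_top.mpr hf) (forall_mem_range.mpr h)

theorem comp_eq_comp_of_apply_eq {g : ι → N} {U : M →L[R] N} (hU : ∀ i, U (f i) = g i)
    {T₁ : M →L[R] M} {T₂ : N →L[R] N} (σ : ι → ι) (h₁ : ∀ i, T₁ (f i) = f (σ i))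
    (h₂ : ∀ i, T₂ (g i) = g (σ i)) (e : M) : T₂ (U e) = U (T₁ e) :=
  congr($(ext_on_range_of_topologicalClosure (S := T₂ ∘L U) (T := U ∘L T₁) hf
    fun i => by simp only [comp_apply, hU, h₁, h₂]) e)

end TopologicalModule

section TotalFamilies

variable {𝕜 ι E F : Type*} [RCLike 𝕜]
  [NormedAddCommGroup E] [InnerProductSpace 𝕜 E] [NormedAddCommGroup F] [InnerProductSpace 𝕜 F]

theorem eq_of_forall_inner_eq_of_topologicalClosure {f : ι → E}
    (hf : (Submodule.span 𝕜 (range f)).topologicalClosure = ⊤) {a b : E}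
    (h : ∀ i, ⟪f i, a⟫_𝕜 = ⟪f i, b⟫_𝕜) : a = b := by
  have : innerSL 𝕜 a = innerSL 𝕜 b :=
    ext_on_range_of_topologicalClosure hf fun i => by
      rw [innerSL_apply_apply, innerSL_apply_apply, ← inner_conj_symm, h, inner_conj_symm]
  exact ext_inner_right 𝕜 fun u => congr($this u)

theorem exists_linearIsometryEquiv_of_inner_eq [CompleteSpace E] [CompleteSpace F]
    {f : ι → E} {g : ι → F} (hf : (Submodule.span 𝕜 (range f)).topologicalClosure = ⊤)
    (hg : (Submodule.span 𝕜 (range g)).topologicalClosure = ⊤)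
    (hfg : ∀ i j, ⟪f i, f j⟫_𝕜 = ⟪g i, g j⟫_𝕜) :
    ∃ U : E ≃ₗᵢ[𝕜] F, ∀ i, U (f i) = g i := by
  set L := Finsupp.linearCombination 𝕜 f
  set M := Finsupp.linearCombination 𝕜 g
  have hLM (c d : ι →₀ 𝕜) : ⟪L c, L d⟫_𝕜 = ⟪M c, M d⟫_𝕜 := by
    simp only [L, M, Finsupp.linearCombination_apply, Finsupp.sum, sum_inner, inner_sum,
      inner_smul_left, inner_smul_right, hfg]
  have hL := Finsupp.denseRange_linearCombination hf
  have hM := Finsupp.denseRange_linearCombination hg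
  refine ⟨(LinearEquiv.refl 𝕜 (ι →₀ 𝕜)).extendOfIsometry L M hL hM fun c => ?_, fun i => ?_⟩
  · simp only [@norm_eq_sqrt_re_inner 𝕜, LinearEquiv.refl_apply, hLM]
  · simpa [L, M] using
      LinearEquiv.extendOfIsometry_eq (LinearEquiv.refl 𝕜 (ι →₀ 𝕜)) L M hL hM _ (.single i 1)

end TotalFamilies

theorem setOf_exists_exists_eq {α β γ : Type*} (f : α → β → γ) :
    {c | ∃ a b, c = f a b} = range (fun p : α × β => f p.1 p.2) := by
  ext; simp [eq_comm]

/-- `E x y` stands for the `A`-valued inner product `⟨x, y⟩` of the Hilbert module, and `ρ` for the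
representation of `A` induced by `π`. -/
structure IsStinespringDilation {A X H K H₀ K₀ : Type*} [Semiring A] [Algebra ℂ A] [Star A]
    [NormedAddCommGroup H] [NormedSpace ℂ H]
    [NormedAddCommGroup K] [InnerProductSpace ℂ K] [CompleteSpace K]
    [NormedAddCommGroup H₀] [InnerProductSpace ℂ H₀] [CompleteSpace H₀]
    [NormedAddCommGroup K₀] [InnerProductSpace ℂ K₀] [CompleteSpace K₀]
    (E : X → X → A) (Φ : X → H →L[ℂ] K) (π : X → H₀ →L[ℂ] K₀) (ρ : A →⋆ₐ[ℂ] (H₀ →L[ℂ] H₀))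
    (V : H →L[ℂ] H₀) (W : K →L[ℂ] K₀) : Prop where
  adjoint_comp : ∀ x y, adjoint (π x) ∘L π y = ρ (E x y)
  comp_adjoint_W : W ∘L adjoint W = 1
  eq_adjoint_comp : ∀ x, Φ x = adjoint W ∘L π x ∘L V
  span_apply_V_dense : (Submodule.span ℂ {k | ∃ x h, k = π x (V h)}).topologicalClosure = ⊤
  span_adjoint_apply_W_dense :
    (Submodule.span ℂ {h | ∃ x k, h = adjoint (π x) (W k)}).topologicalClosure = ⊤

namespace IsStinespringDilation

variable {A X H K H₁ K₁ H₂ K₂ : Type*}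
  [NormedAddCommGroup H] [NormedSpace ℂ H]
  [NormedAddCommGroup K] [InnerProductSpace ℂ K] [CompleteSpace K]
  [NormedAddCommGroup H₁] [InnerProductSpace ℂ H₁] [CompleteSpace H₁]
  [NormedAddCommGroup K₁] [InnerProductSpace ℂ K₁] [CompleteSpace K₁]
  [NormedAddCommGroup H₂] [InnerProductSpace ℂ H₂] [CompleteSpace H₂]
  [NormedAddCommGroup K₂] [InnerProductSpace ℂ K₂] [CompleteSpace K₂]
  {E : X → X → A} {Φ : X → H →L[ℂ] K}

section Single

variable [Semiring A] [Algebra ℂ A] [Star A]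
  {π : X → H₁ →L[ℂ] K₁} {ρ : A →⋆ₐ[ℂ] (H₁ →L[ℂ] H₁)} {V : H →L[ℂ] H₁} {W : K →L[ℂ] K₁}
  (S : IsStinespringDilation E Φ π ρ V W)
include S

theorem span_range_apply_V_dense :
    (Submodule.span ℂ (range fun p : X × H => π p.1 (V p.2))).topologicalClosure = ⊤ := by
  rw [← setOf_exists_exists_eq fun x h => π x (V h)]; exact S.span_apply_V_dense

theorem span_range_adjoint_apply_W_dense :
    (Submodule.span ℂ (range fun p : X × K => adjoint (π p.1) (W p.2))).topologicalClosure = ⊤ := by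
  rw [← setOf_exists_exists_eq fun x k => adjoint (π x) (W k)]; exact S.span_adjoint_apply_W_dense

theorem adjoint_W_apply (x : X) (h : H) : adjoint W (π x (V h)) = Φ x h := by
  rw [S.eq_adjoint_comp x]; rfl

theorem inner_apply_V (x y : X) (g h : H) : ⟪π x (V g), π y (V h)⟫_ℂ = ⟪Φ x g, Φ y h⟫_ℂ := by
  have hW : ∀ a b, ⟪adjoint W a, adjoint W b⟫_ℂ = ⟪a, b⟫_ℂ :=
    (inner_map_map_iff_adjoint_comp_self (adjoint W)).mpr
      (by rw [adjoint_adjoint]; exact S.comp_adjoint_W)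
  rw [← hW, S.adjoint_W_apply, S.adjoint_W_apply]

theorem inner_apply_apply (x y : X) (ξ ζ : H₁) : ⟪π x ξ, π y ζ⟫_ℂ = ⟪ξ, ρ (E x y) ζ⟫_ℂ := by
  rw [← S.adjoint_comp, comp_apply, adjoint_inner_right]

theorem adjoint_apply_apply (x y : X) (ξ : H₁) : adjoint (π x) (π y ξ) = ρ (E x y) ξ := by
  rw [← S.adjoint_comp]; rfl

theorem inner_apply_V_W (x : X) (h : H) (k : K) : ⟪π x (V h), W k⟫_ℂ = ⟪Φ x h, k⟫_ℂ := by
  rw [← adjoint_inner_left, S.adjoint_W_apply]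

theorem inner_adjoint_apply_W_V (x : X) (k : K) (h : H) :
    ⟪adjoint (π x) (W k), V h⟫_ℂ = ⟪k, Φ x h⟫_ℂ := by
  rw [adjoint_inner_left, ← adjoint_inner_right, S.adjoint_W_apply]

end Single

section Pair

variable {π₁ : X → H₁ →L[ℂ] K₁} {V₁ : H →L[ℂ] H₁} {W₁ : K →L[ℂ] K₁}
  {π₂ : X → H₂ →L[ℂ] K₂} {V₂ : H →L[ℂ] H₂} {W₂ : K →L[ℂ] K₂}

section

variable [Semiring A] [Algebra ℂ A] [Star A]
  {ρ₁ : A →⋆ₐ[ℂ] (H₁ →L[ℂ] H₁)} {ρ₂ : A →⋆ₐ[ℂ] (H₂ →L[ℂ] H₂)}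
  (S₁ : IsStinespringDilation E Φ π₁ ρ₁ V₁ W₁) (S₂ : IsStinespringDilation E Φ π₂ ρ₂ V₂ W₂)
include S₁ S₂

theorem exists_unitary_apply_V :
    ∃ U : K₁ ≃ₗᵢ[ℂ] K₂, ∀ x h, U (π₁ x (V₁ h)) = π₂ x (V₂ h) := by
  obtain ⟨U, hU⟩ := exists_linearIsometryEquiv_of_inner_eq S₁.span_range_apply_V_dense
    S₂.span_range_apply_V_dense fun p q => by rw [S₁.inner_apply_V, S₂.inner_apply_V]
  exact ⟨U, fun x h => hU (x, h)⟩

theorem unitary_apply_W {U : K₁ ≃ₗᵢ[ℂ] K₂} (hU : ∀ x h, U (π₁ x (V₁ h)) = π₂ x (V₂ h)) (k : K) :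
    U (W₁ k) = W₂ k :=
  eq_of_forall_inner_eq_of_topologicalClosure S₂.span_range_apply_V_dense fun ⟨x, h⟩ => by
    rw [← hU, U.inner_map_map, S₁.inner_apply_V_W, hU, S₂.inner_apply_V_W]

theorem unitary_apply_V {U : H₁ ≃ₗᵢ[ℂ] H₂}
    (hU : ∀ x k, U (adjoint (π₁ x) (W₁ k)) = adjoint (π₂ x) (W₂ k)) (h : H) : U (V₁ h) = V₂ h :=
  eq_of_forall_inner_eq_of_topologicalClosure S₂.span_range_adjoint_apply_W_dense fun ⟨x, k⟩ => by
    rw [← hU, U.inner_map_map, S₁.inner_adjoint_apply_W_V, hU, S₂.inner_adjoint_apply_W_V]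

end

variable [CStarAlgebra A] {ρ₁ : A →⋆ₐ[ℂ] (H₁ →L[ℂ] H₁)} {ρ₂ : A →⋆ₐ[ℂ] (H₂ →L[ℂ] H₂)}
  (S₁ : IsStinespringDilation E Φ π₁ ρ₁ V₁ W₁) (S₂ : IsStinespringDilation E Φ π₂ ρ₂ V₂ W₂)
  (hE : (Submodule.span ℂ {a | ∃ x y, a = E x y}).topologicalClosure = ⊤)
include S₁ S₂ hE

theorem inner_V_rho_V_eq (a : A) (g h : H) : ⟪V₁ g, ρ₁ a (V₁ h)⟫_ℂ = ⟪V₂ g, ρ₂ a (V₂ h)⟫_ℂ := by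
  let c₁ : A →L[ℂ] ℂ := innerSL ℂ (V₁ g) ∘L apply ℂ H₁ (V₁ h) ∘L
    ContinuousLinearMap.mk ρ₁.toLinearMap (map_continuous ρ₁)
  let c₂ : A →L[ℂ] ℂ := innerSL ℂ (V₂ g) ∘L apply ℂ H₂ (V₂ h) ∘L
    ContinuousLinearMap.mk ρ₂.toLinearMap (map_continuous ρ₂)
  have hc : c₁ = c₂ := by
    refine ext_on_range_of_topologicalClosure (f := fun p : X × X => E p.1 p.2)
      (by rw [← setOf_exists_exists_eq E]; exact hE) fun ⟨x, y⟩ => ?_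
    change ⟪V₁ g, ρ₁ (E x y) (V₁ h)⟫_ℂ = ⟪V₂ g, ρ₂ (E x y) (V₂ h)⟫_ℂ
    rw [← S₁.inner_apply_apply, ← S₂.inner_apply_apply, S₁.inner_apply_V, S₂.inner_apply_V]
  exact congr($hc a)

variable {U : K₁ ≃ₗᵢ[ℂ] K₂} (hU : ∀ x h, U (π₁ x (V₁ h)) = π₂ x (V₂ h))
include hU

theorem unitary_apply_apply_rho_V (x : X) (b : A) (g : H) :
    U (π₁ x (ρ₁ b (V₁ g))) = π₂ x (ρ₂ b (V₂ g)) :=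
  eq_of_forall_inner_eq_of_topologicalClosure S₂.span_range_apply_V_dense fun ⟨z, h⟩ => by
    rw [← hU, U.inner_map_map, hU, S₁.inner_apply_apply, S₂.inner_apply_apply,
      ← mul_apply_eq_comp, ← mul_apply_eq_comp, ← map_mul, ← map_mul, S₁.inner_V_rho_V_eq S₂ hE]

theorem unitary_apply_apply_adjoint_apply (x y : X) (ζ : K₁) :
    U (π₁ x (adjoint (π₁ y) ζ)) = π₂ x (adjoint (π₂ y) (U ζ)) :=
  congr($(ext_on_range_of_topologicalClosure S₁.span_range_apply_V_dense
    (S := (U : K₁ →L[ℂ] K₂) ∘L π₁ x ∘L adjoint (π₁ y))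
    (T := π₂ x ∘L adjoint (π₂ y) ∘L (U : K₁ →L[ℂ] K₂)) fun ⟨w, g⟩ => by
      simp only [comp_apply, LinearIsometryEquiv.coe_coe'', hU, S₁.adjoint_apply_apply,
        S₂.adjoint_apply_apply, S₁.unitary_apply_apply_rho_V S₂ hE hU]) ζ)

theorem exists_unitary_adjoint_apply_W :
    ∃ U' : H₁ ≃ₗᵢ[ℂ] H₂, ∀ x k, U' (adjoint (π₁ x) (W₁ k)) = adjoint (π₂ x) (W₂ k) := by
  obtain ⟨U', hU'⟩ := exists_linearIsometryEquiv_of_inner_eq S₁.span_range_adjoint_apply_W_dense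
    S₂.span_range_adjoint_apply_W_dense fun ⟨x, k⟩ ⟨y, l⟩ => by
      rw [adjoint_inner_left, adjoint_inner_left, ← U.inner_map_map,
        S₁.unitary_apply_apply_adjoint_apply S₂ hE hU, S₁.unitary_apply_W S₂ hU,
        S₁.unitary_apply_W S₂ hU]
  exact ⟨U', fun x k => hU' (x, k)⟩

theorem unitary_apply_apply {U' : H₁ ≃ₗᵢ[ℂ] H₂}
    (hU' : ∀ x k, U' (adjoint (π₁ x) (W₁ k)) = adjoint (π₂ x) (W₂ k)) (x : X) (h : H₁) :
    U (π₁ x h) = π₂ x (U' h) :=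
  congr($(ext_on_range_of_topologicalClosure S₁.span_range_adjoint_apply_W_dense
    (S := (U : K₁ →L[ℂ] K₂) ∘L π₁ x) (T := π₂ x ∘L (U' : H₁ →L[ℂ] H₂)) fun ⟨y, k⟩ => by
      simp only [comp_apply, LinearIsometryEquiv.coe_coe'', hU',
        S₁.unitary_apply_apply_adjoint_apply S₂ hE hU, S₁.unitary_apply_W S₂ hU]) h)

end Pair

end IsStinespringDilation

theorem IsUnitaryRep.adjoint_apply_apply {G H₀ : Type*} [Group G] [NormedAddCommGroup H₀]
    [InnerProductSpace ℂ H₀] [CompleteSpace H₀] {v : G → H₀ →L[ℂ] H₀} (hv : IsUnitaryRep v)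
    (t : G) (ξ : H₀) : adjoint (v t) (v t ξ) = ξ :=
  congr($((hv.2.2 t).1) ξ)

section Covariance

variable {G X H K H₀ K₀ : Type*} [Group G]
  [NormedAddCommGroup H] [NormedSpace ℂ H] [NormedAddCommGroup K] [NormedSpace ℂ K]
  [NormedAddCommGroup H₀] [InnerProductSpace ℂ H₀] [CompleteSpace H₀]
  [NormedAddCommGroup K₀] [InnerProductSpace ℂ K₀]
  {η : G → X → X} {π : X → H₀ →L[ℂ] K₀} {v : G → H₀ →L[ℂ] H₀} {w : G → K₀ →L[ℂ] K₀}
  (hcov : ∀ t x, π (η t x) = w t ∘L π x ∘L adjoint (v t))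
include hcov

theorem apply_apply_V_of_covariant (hv : IsUnitaryRep v) {u : G → H →L[ℂ] H} {V : H →L[ℂ] H₀}
    (hb : ∀ t, v t ∘L V = V ∘L u t) (t : G) (x : X) (h : H) :
    w t (π x (V h)) = π (η t x) (V (u t h)) := by
  rw [hcov, ← comp_apply V (u t), ← hb]
  simp only [comp_apply, hv.adjoint_apply_apply]

theorem apply_adjoint_apply_W_of_covariant [CompleteSpace K₀] (hw : IsUnitaryRep w)
    {u' : G → K →L[ℂ] K} {W : K →L[ℂ] K₀} (hc : ∀ t, w t ∘L W = W ∘L u' t) (t : G) (x : X) (k : K) :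
    v t (adjoint (π x) (W k)) = adjoint (π (η t x)) (W (u' t k)) := by
  rw [hcov, adjoint_comp, adjoint_comp, adjoint_adjoint, ← comp_apply W (u' t), ← hc]
  simp only [comp_apply, hw.adjoint_apply_apply]

end Covariance

theorem stmt_15_general
    {A : Type*} [NormedRing A] [StarRing A] [CStarRing A] [NormedAlgebra ℂ A]
    [CompleteSpace A] [StarModule ℂ A]
    {H K HΦ KΦ H' K' : Type*}
    [NormedAddCommGroup H] [InnerProductSpace ℂ H]
    [NormedAddCommGroup K] [InnerProductSpace ℂ K] [CompleteSpace K]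
    [NormedAddCommGroup HΦ] [InnerProductSpace ℂ HΦ] [CompleteSpace HΦ]
    [NormedAddCommGroup KΦ] [InnerProductSpace ℂ KΦ] [CompleteSpace KΦ]
    [NormedAddCommGroup H'] [InnerProductSpace ℂ H'] [CompleteSpace H']
    [NormedAddCommGroup K'] [InnerProductSpace ℂ K'] [CompleteSpace K']
    {X : Type*} {G : Type*} [Group G]
    (E : X → X → A)
    (hfull : (Submodule.span ℂ {a : A | ∃ x y, a = E x y}).topologicalClosure = ⊤)
    (η : G → X → X)
    (u : G → H →L[ℂ] H)
    (u' : G → K →L[ℂ] K)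
    (Φ : X → H →L[ℂ] K)
    -- the covariant Stinespring construction `(πΦ, vΦ, wΦ, HΦ, KΦ, VΦ, WΦ)`
    (πΦ : X → HΦ →L[ℂ] KΦ) (ρΦ : A →⋆ₐ[ℂ] (HΦ →L[ℂ] HΦ))
    (hrepΦ : ∀ x y, adjoint (πΦ x) ∘L πΦ y = ρΦ (E x y))
    (vΦ : G → HΦ →L[ℂ] HΦ) (hvΦ : IsUnitaryRep vΦ)
    (wΦ : G → KΦ →L[ℂ] KΦ) (hwΦ : IsUnitaryRep wΦ)
    (hcovΦ : ∀ t x, πΦ (η t x) = wΦ t ∘L πΦ x ∘L adjoint (vΦ t))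
    (VΦ : H →L[ℂ] HΦ) (WΦ : K →L[ℂ] KΦ) (hWΦ : WΦ ∘L adjoint WΦ = 1)
    (ha : ∀ x, Φ x = adjoint WΦ ∘L πΦ x ∘L VΦ)
    (hb : ∀ t, vΦ t ∘L VΦ = VΦ ∘L u t)
    (hc : ∀ t, wΦ t ∘L WΦ = WΦ ∘L u' t)
    (hdΦ : (Submodule.span ℂ {k : KΦ | ∃ x h, k = πΦ x (VΦ h)}).topologicalClosure = ⊤)
    (heΦ : (Submodule.span ℂ {h : HΦ | ∃ x k, h = adjoint (πΦ x) (WΦ k)}).topologicalClosure = ⊤)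
    -- a second covariant Stinespring construction `(πX, v, w, H', K', V', W')`
    (πX : X → H' →L[ℂ] K') (ρ' : A →⋆ₐ[ℂ] (H' →L[ℂ] H'))
    (hrep' : ∀ x y, adjoint (πX x) ∘L πX y = ρ' (E x y))
    (v : G → H' →L[ℂ] H') (hv : IsUnitaryRep v)
    (w : G → K' →L[ℂ] K') (hw : IsUnitaryRep w)
    (hcov' : ∀ t x, πX (η t x) = w t ∘L πX x ∘L adjoint (v t))
    (V' : H →L[ℂ] H') (W' : K →L[ℂ] K') (hW' : W' ∘L adjoint W' = 1)
    (ha' : ∀ x, Φ x = adjoint W' ∘L πX x ∘L V')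
    (hb' : ∀ t, v t ∘L V' = V' ∘L u t)
    (hc' : ∀ t, w t ∘L W' = W' ∘L u' t)
    (hd' : (Submodule.span ℂ {k : K' | ∃ x h, k = πX x (V' h)}).topologicalClosure = ⊤)
    (he' : (Submodule.span ℂ {h : H' | ∃ x k, h = adjoint (πX x) (W' k)}).topologicalClosure = ⊤) :
    ∃ (U₁ : HΦ ≃ₗᵢ[ℂ] H') (U₂ : KΦ ≃ₗᵢ[ℂ] K'),
      (∀ x h, U₂ (πΦ x h) = πX x (U₁ h)) ∧
        (∀ t h, v t (U₁ h) = U₁ (vΦ t h)) ∧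
        (∀ t k, w t (U₂ k) = U₂ (wΦ t k)) ∧
        (∀ h, U₁ (VΦ h) = V' h) ∧ ∀ k, U₂ (WΦ k) = W' k := by
  let _ : CStarAlgebra A := { ‹NormedRing A›, ‹StarRing A›, ‹CStarRing A›, ‹NormedAlgebra ℂ A›,
    ‹CompleteSpace A›, ‹StarModule ℂ A› with }
  have S₁ : IsStinespringDilation E Φ πΦ ρΦ VΦ WΦ := ⟨hrepΦ, hWΦ, ha, hdΦ, heΦ⟩
  have S₂ : IsStinespringDilation E Φ πX ρ' V' W' := ⟨hrep', hW', ha', hd', he'⟩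
  obtain ⟨U₂, hU₂⟩ := S₁.exists_unitary_apply_V S₂
  obtain ⟨U₁, hU₁⟩ := S₁.exists_unitary_adjoint_apply_W S₂ hfull hU₂
  refine ⟨U₁, U₂, S₁.unitary_apply_apply S₂ hfull hU₂ hU₁, fun t => ?_, fun t => ?_,
    S₁.unitary_apply_V S₂ hU₁, S₁.unitary_apply_W S₂ hU₂⟩
  · exact comp_eq_comp_of_apply_eq S₁.span_range_adjoint_apply_W_dense
      (U := (U₁ : HΦ →L[ℂ] H')) (fun p => hU₁ p.1 p.2) (fun p => (η t p.1, u' t p.2))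
      (fun p => apply_adjoint_apply_W_of_covariant hcovΦ hwΦ hc t p.1 p.2)
      (fun p => apply_adjoint_apply_W_of_covariant hcov' hw hc' t p.1 p.2)
  · exact comp_eq_comp_of_apply_eq S₁.span_range_apply_V_dense
      (U := (U₂ : KΦ →L[ℂ] K')) (fun p => hU₂ p.1 p.2) (fun p => (η t p.1, u t p.2))
      (fun p => apply_apply_V_of_covariant hcovΦ hvΦ hb t p.1 p.2)
      (fun p => apply_apply_V_of_covariant hcov' hv hb' t p.1 p.2)

/-- covariant Stinespring theorem (uniqueness): any two covariant
Stinespring constructions `(π_Φ, v^Φ, w^Φ, H_Φ, K_Φ, V_Φ, W_Φ)` and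
`(π_X, v, w, H', K', V', W')` for the same `(u',u)`-covariant completely positive
map `Φ` are unitarily equivalent. -/
theorem stmt_15
    {A : Type*} [NormedRing A] [StarRing A] [CStarRing A] [NormedAlgebra ℂ A]
    [CompleteSpace A] [StarModule ℂ A]
    {H K HΦ KΦ H' K' : Type*}
    [NormedAddCommGroup H] [InnerProductSpace ℂ H] [CompleteSpace H]
    [NormedAddCommGroup K] [InnerProductSpace ℂ K] [CompleteSpace K]
    [NormedAddCommGroup HΦ] [InnerProductSpace ℂ HΦ] [CompleteSpace HΦ]
    [NormedAddCommGroup KΦ] [InnerProductSpace ℂ KΦ] [CompleteSpace KΦ]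
    [NormedAddCommGroup H'] [InnerProductSpace ℂ H'] [CompleteSpace H']
    [NormedAddCommGroup K'] [InnerProductSpace ℂ K'] [CompleteSpace K']
    {X : Type*} {G : Type*} [Group G]
    (E : X → X → A)
    (hfull : (Submodule.span ℂ {a : A | ∃ x y, a = E x y}).topologicalClosure = ⊤)
    (η : G → X → X) (hη_one : ∀ x, η 1 x = x)
    (hη_mul : ∀ s t x, η (s * t) x = η s (η t x))
    (u : G → H →L[ℂ] H) (hu : IsUnitaryRep u)
    (u' : G → K →L[ℂ] K) (hu' : IsUnitaryRep u')
    (Φ : X → H →L[ℂ] K) (φ : A →ₗ[ℂ] (H →L[ℂ] H)) (hcp : IsCPMap φ)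
    (hΦ : ∀ x y, adjoint (Φ x) ∘L Φ y = φ (E x y))
    (hcov : ∀ t x, Φ (η t x) = u' t ∘L Φ x ∘L adjoint (u t))
    -- the covariant Stinespring construction `(πΦ, vΦ, wΦ, HΦ, KΦ, VΦ, WΦ)`
    (πΦ : X → HΦ →L[ℂ] KΦ) (ρΦ : A →⋆ₐ[ℂ] (HΦ →L[ℂ] HΦ))
    (hrepΦ : ∀ x y, adjoint (πΦ x) ∘L πΦ y = ρΦ (E x y))
    (vΦ : G → HΦ →L[ℂ] HΦ) (hvΦ : IsUnitaryRep vΦ)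
    (wΦ : G → KΦ →L[ℂ] KΦ) (hwΦ : IsUnitaryRep wΦ)
    (hcovΦ : ∀ t x, πΦ (η t x) = wΦ t ∘L πΦ x ∘L adjoint (vΦ t))
    (VΦ : H →L[ℂ] HΦ) (WΦ : K →L[ℂ] KΦ) (hWΦ : WΦ ∘L adjoint WΦ = 1)
    (ha : ∀ x, Φ x = adjoint WΦ ∘L πΦ x ∘L VΦ)
    (hb : ∀ t, vΦ t ∘L VΦ = VΦ ∘L u t)
    (hc : ∀ t, wΦ t ∘L WΦ = WΦ ∘L u' t)
    (hdΦ : (Submodule.span ℂ {k : KΦ | ∃ x h, k = πΦ x (VΦ h)}).topologicalClosure = ⊤)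
    (heΦ : (Submodule.span ℂ {h : HΦ | ∃ x k, h = adjoint (πΦ x) (WΦ k)}).topologicalClosure = ⊤)
    -- a second covariant Stinespring construction `(πX, v, w, H', K', V', W')`
    (πX : X → H' →L[ℂ] K') (ρ' : A →⋆ₐ[ℂ] (H' →L[ℂ] H'))
    (hrep' : ∀ x y, adjoint (πX x) ∘L πX y = ρ' (E x y))
    (v : G → H' →L[ℂ] H') (hv : IsUnitaryRep v)
    (w : G → K' →L[ℂ] K') (hw : IsUnitaryRep w)
    (hcov' : ∀ t x, πX (η t x) = w t ∘L πX x ∘L adjoint (v t))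
    (V' : H →L[ℂ] H') (W' : K →L[ℂ] K') (hW' : W' ∘L adjoint W' = 1)
    (ha' : ∀ x, Φ x = adjoint W' ∘L πX x ∘L V')
    (hb' : ∀ t, v t ∘L V' = V' ∘L u t)
    (hc' : ∀ t, w t ∘L W' = W' ∘L u' t)
    (hd' : (Submodule.span ℂ {k : K' | ∃ x h, k = πX x (V' h)}).topologicalClosure = ⊤)
    (he' : (Submodule.span ℂ {h : H' | ∃ x k, h = adjoint (πX x) (W' k)}).topologicalClosure = ⊤) :
    ∃ (U₁ : HΦ ≃ₗᵢ[ℂ] H') (U₂ : KΦ ≃ₗᵢ[ℂ] K'),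
      (∀ x h, U₂ (πΦ x h) = πX x (U₁ h)) ∧
        (∀ t h, v t (U₁ h) = U₁ (vΦ t h)) ∧
        (∀ t k, w t (U₂ k) = U₂ (wΦ t k)) ∧
        (∀ h, U₁ (VΦ h) = V' h) ∧ ∀ k, U₂ (WΦ k) = W' k :=
  stmt_15_general E hfull η u u' Φ πΦ ρΦ hrepΦ vΦ hvΦ wΦ hwΦ hcovΦ VΦ WΦ hWΦ ha hb hc hdΦ heΦ πX ρ'
    hrep' v hv w hw hcov' V' W' hW' ha' hb' hc' hd' he'
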